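/- Fix a ∈ ℕ^n, and let H_a ≤ G be the subgroup of all g ∈ G such that for every i ∈ {1,…,n}: g(e_{i,k}) = e_{i,k} for all k ≤ a_i, and g(e_{i,k}) ∈ span{e_{i,l} : l > a_i} for all k > a_i. Then for any two polynomial representations M and N of G, the canonical linear map M^{H_a} ⊗_ℂ N^{H_a} → (M ⊗_ℂ N)^{H_a} is an isomorphism of complex vector spaces, where G acts diagonally on M ⊗_ℂ N and (−)^{H_a} denotes the subspace of H_a-invariant vectors. -/

import Mathlib

set_option linter.unusedVariables false
set_option maxHeartbeats 1000000

open scoped TensorProduct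

/-- The infinite-dimensional vector space `V` with basis `e_{i,k}`, `i : Fin n`, `k : ℕ`. -/
abbrev V (n : ℕ) : Type := (Fin n × ℕ) →₀ ℂ

/-- The basis vector `e_{i,k}`. -/
noncomputable def ee {n : ℕ} (x : Fin n × ℕ) : V n := Finsupp.single x 1

/-- The subspace `V_i`: the span of the basis vectors of the lowest `i` weights. -/
noncomputable def Vle (n i : ℕ) : Submodule ℂ (V n) :=
  Submodule.span ℂ {v | ∃ x : Fin n × ℕ, (x.1 : ℕ) < i ∧ v = ee x}

/-- The defining property of the group `G`: a flag-preserving automorphism of `V`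
moving only finitely many basis vectors. -/
def GP {n : ℕ} (g : V n ≃ₗ[ℂ] V n) : Prop :=
  (∀ i : ℕ, Submodule.map (g : V n →ₗ[ℂ] V n) (Vle n i) ≤ Vle n i) ∧
  ∃ F : Finset (Fin n × ℕ), (∀ x ∉ F, g (ee x) = ee x) ∧
    ∀ x ∈ F, g (ee x) ∈ Submodule.span ℂ {v | ∃ y ∈ F, v = ee y}

lemma spanF_eq (n : ℕ) (F : Finset (Fin n × ℕ)) :
    Submodule.span ℂ {v : V n | ∃ y ∈ F, v = ee y} =
      Finsupp.supported ℂ ℂ (F : Set (Fin n × ℕ)) := by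
  rw [Finsupp.supported_eq_span_single]
  congr 1
  ext v
  constructor
  · rintro ⟨y, hy, rfl⟩
    exact ⟨y, hy, rfl⟩
  · rintro ⟨y, hy, rfl⟩
    exact ⟨y, hy, rfl⟩

lemma mem_spanF {n : ℕ} {F : Finset (Fin n × ℕ)} {v : V n} :
    v ∈ Submodule.span ℂ {v : V n | ∃ y ∈ F, v = ee y} ↔ ∀ x ∉ F, v x = 0 := by
  rw [spanF_eq, Finsupp.mem_supported']
  exact ⟨fun h x hx => h x (by simpa using hx), fun h x hx => h x (by simpa using hx)⟩

lemma Vle_eq (n i : ℕ) :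
    Vle n i = Finsupp.supported ℂ ℂ {x : Fin n × ℕ | (x.1 : ℕ) < i} := by
  rw [Finsupp.supported_eq_span_single, Vle]
  congr 1
  ext v
  constructor
  · rintro ⟨y, hy, rfl⟩
    exact ⟨y, hy, rfl⟩
  · rintro ⟨y, hy, rfl⟩
    exact ⟨y, hy, rfl⟩

lemma mem_Vle {n i : ℕ} {v : V n} :
    v ∈ Vle n i ↔ ∀ x : Fin n × ℕ, i ≤ (x.1 : ℕ) → v x = 0 := by
  rw [Vle_eq, Finsupp.mem_supported']
  constructor
  · intro h x hx
    exact h x (by simpa using hx)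
  · intro h x hx
    simp only [Set.mem_setOf_eq, not_lt] at hx
    exact h x hx

lemma maps_spanF {n : ℕ} (g : V n ≃ₗ[ℂ] V n) (F' F : Finset (Fin n × ℕ)) (hFF : F' ⊆ F)
    (hfix : ∀ x ∉ F', g (ee x) = ee x)
    (hmov : ∀ x ∈ F', g (ee x) ∈ Submodule.span ℂ {v : V n | ∃ y ∈ F', v = ee y})
    {v : V n} (hv : v ∈ Submodule.span ℂ {v : V n | ∃ y ∈ F, v = ee y}) :
    g v ∈ Submodule.span ℂ {v : V n | ∃ y ∈ F, v = ee y} := by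
  induction hv using Submodule.span_induction with
  | mem w hw =>
      obtain ⟨y, hy, rfl⟩ := hw
      by_cases hy' : y ∈ F'
      · exact Submodule.span_mono
          (fun u hu => by
            obtain ⟨z, hz, rfl⟩ := hu
            exact ⟨z, hFF hz, rfl⟩) (hmov y hy')
      · rw [hfix y hy']
        exact Submodule.subset_span ⟨y, hy, rfl⟩
  | zero => rw [map_zero]; exact Submodule.zero_mem _
  | add u w _ _ hu hw => rw [map_add]; exact Submodule.add_mem _ hu hw
  | smul c u _ hu => rw [map_smul]; exact Submodule.smul_mem _ c hu

lemma fixes_supported {n : ℕ} (g : V n ≃ₗ[ℂ] V n) (F : Finset (Fin n × ℕ))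
    (hfix : ∀ x ∉ F, g (ee x) = ee x) :
    ∀ v ∈ Finsupp.supported ℂ ℂ ((F : Set (Fin n × ℕ))ᶜ), g v = v := by
  intro v hv
  rw [Finsupp.supported_eq_span_single] at hv
  induction hv using Submodule.span_induction with
  | mem w hw =>
      obtain ⟨y, hy, rfl⟩ := hw
      exact hfix y (by simpa using hy)
  | zero => rw [map_zero]
  | add u w _ _ hu hw => rw [map_add, hu, hw]
  | smul c u _ hu => rw [map_smul, hu]

lemma fixes_off {n : ℕ} (g : V n ≃ₗ[ℂ] V n) (F : Finset (Fin n × ℕ))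
    (hfix : ∀ x ∉ F, g (ee x) = ee x)
    {v : V n} (hv : ∀ x ∈ F, v x = 0) : g v = v := by
  refine fixes_supported g F hfix v ?_
  rw [Finsupp.mem_supported']
  intro x hx
  simp only [Set.mem_compl_iff, Finset.mem_coe, not_not] at hx
  exact hv x hx

lemma spanF_fd {n : ℕ} (F : Finset (Fin n × ℕ)) :
    FiniteDimensional ℂ (Submodule.span ℂ {v : V n | ∃ y ∈ F, v = ee y}) := by
  have h : {v : V n | ∃ y ∈ F, v = ee y} = (fun y => ee y) '' (F : Set (Fin n × ℕ)) := by
    ext v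
    constructor
    · rintro ⟨y, hy, rfl⟩; exact ⟨y, hy, rfl⟩
    · rintro ⟨y, hy, rfl⟩; exact ⟨y, hy, rfl⟩
  rw [h]
  exact FiniteDimensional.span_of_finite ℂ (F.finite_toSet.image _)

lemma symm_stable {n : ℕ} (A : V n ≃ₗ[ℂ] V n) (p : Submodule ℂ (V n))
    [FiniteDimensional ℂ p] (hstab : ∀ v ∈ p, A v ∈ p) :
    ∀ v ∈ p, A.symm v ∈ p := by
  intro v hv
  have hinj : Function.Injective (A.toLinearMap.restrict hstab) := by
    intro x y hxy
    apply Subtype.ext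
    apply A.injective
    exact congrArg Subtype.val hxy
  have hsurj : Function.Surjective (A.toLinearMap.restrict hstab) :=
    by
      have := @LinearMap.injective_iff_surjective ℂ p _ _ _ _ (A.toLinearMap.restrict hstab)
      exact this.mp hinj
  obtain ⟨w, hw⟩ := hsurj ⟨v, hv⟩
  have h1 : A w.1 = v := congrArg Subtype.val hw
  have h2 : A.symm v = w.1 := by rw [← h1, LinearEquiv.symm_apply_apply]
  rw [h2]
  exact w.2

/-- The group `G` of flag-preserving automorphisms of `V` moving only finitely many
basis vectors. -/
noncomputable def G (n : ℕ) : Subgroup (V n ≃ₗ[ℂ] V n) where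
  carrier := {g | GP g}
  one_mem' := by
    constructor
    · intro i v hv
      simpa using hv
    · exact ⟨∅, fun x _ => rfl, fun x hx => absurd hx (Finset.notMem_empty x)⟩
  mul_mem' := by
    rintro A B ⟨hA1, FA, hA2, hA3⟩ ⟨hB1, FB, hB2, hB3⟩
    constructor
    · intro i v hv
      obtain ⟨w, hw, rfl⟩ := hv
      show A (B w) ∈ Vle n i
      exact hA1 i ⟨B w, hB1 i ⟨w, hw, rfl⟩, rfl⟩
    · refine ⟨FA ∪ FB, ?_, ?_⟩
      · intro x hx
        have hxa : x ∉ FA := fun h => hx (Finset.mem_union_left _ h)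
        have hxb : x ∉ FB := fun h => hx (Finset.mem_union_right _ h)
        show A (B (ee x)) = ee x
        rw [hB2 x hxb, hA2 x hxa]
      · intro x hx
        show A (B (ee x)) ∈ _
        have hBx : B (ee x) ∈ Submodule.span ℂ {v : V n | ∃ y ∈ FA ∪ FB, v = ee y} := by
          by_cases hxb : x ∈ FB
          · refine Submodule.span_mono (fun u hu => ?_) (hB3 x hxb)
            obtain ⟨z, hz, rfl⟩ := hu
            exact ⟨z, Finset.mem_union_right _ hz, rfl⟩
          · rw [hB2 x hxb]
            exact Submodule.subset_span ⟨x, hx, rfl⟩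
        exact maps_spanF A FA (FA ∪ FB) Finset.subset_union_left hA2 hA3 hBx
  inv_mem' := by
    rintro A ⟨hA1, F, hfix, hmov⟩
    have hspan : ∀ v ∈ Submodule.span ℂ {v : V n | ∃ y ∈ F, v = ee y},
        A v ∈ Submodule.span ℂ {v : V n | ∃ y ∈ F, v = ee y} :=
      fun v hv => maps_spanF A F F (le_refl F) hfix hmov hv
    haveI := spanF_fd F
    constructor
    · intro i v' hv'
      obtain ⟨v, hv, rfl⟩ := hv'
      show A.symm v ∈ Vle n i
      classical
      set w := A.symm v with hwdef
      set wF := Finsupp.filter (· ∈ F) w with hwF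
      set wO := Finsupp.filter (fun x => ¬ x ∈ F) w with hwO
      have hsplit : wF + wO = w := Finsupp.filter_pos_add_filter_neg w _
      have hwFmem : wF ∈ Submodule.span ℂ {v : V n | ∃ y ∈ F, v = ee y} := by
        rw [mem_spanF]
        intro x hx
        exact Finsupp.filter_apply_neg _ _ hx
      have hgO : A wO = wO := by
        refine fixes_off A F hfix ?_
        intro x hx
        exact Finsupp.filter_apply_neg _ _ (by simpa using hx)
      have hAw : A w = v := A.apply_symm_apply v
      have hv2 : A wF + wO = v := by
        rw [← hAw, ← hsplit, map_add, hgO]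
      have hAwFspan : A wF ∈ Submodule.span ℂ {v : V n | ∃ y ∈ F, v = ee y} :=
        hspan wF hwFmem
      have hwOVle : wO ∈ Vle n i := by
        rw [mem_Vle]
        intro x hx
        by_cases hxF : x ∈ F
        · exact Finsupp.filter_apply_neg _ _ (by simpa using hxF)
        · have h1 : (A wF) x = 0 := by
            rw [mem_spanF] at hAwFspan
            exact hAwFspan x hxF
          have h2 : (A wF) x + wO x = v x := by
            rw [← hv2]; rfl
          have h3 : v x = 0 := mem_Vle.mp hv x hx
          rw [h1, zero_add] at h2
          rw [h2, h3]
      have hAwFVle : A wF ∈ Vle n i := by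
        have : A wF = v - wO := by rw [← hv2]; abel
        rw [this]
        exact Submodule.sub_mem _ hv hwOVle
      -- `A wF` lies in the finite-dimensional `A`-stable subspace `Vle n i ⊓ spanF F`
      set U := Vle n i ⊓ Submodule.span ℂ {v : V n | ∃ y ∈ F, v = ee y} with hU
      haveI : FiniteDimensional ℂ U :=
        Submodule.finiteDimensional_of_le inf_le_right
      have hUstab : ∀ u ∈ U, A u ∈ U := by
        intro u hu
        exact ⟨hA1 i ⟨u, hu.1, rfl⟩, hspan u hu.2⟩
      have hwFU : wF ∈ U := by
        have := symm_stable A U hUstab (A wF) ⟨hAwFVle, hAwFspan⟩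
        rwa [LinearEquiv.symm_apply_apply] at this
      have : w ∈ Vle n i := by
        rw [← hsplit]
        exact Submodule.add_mem _ hwFU.1 hwOVle
      exact this
    · refine ⟨F, ?_, ?_⟩
      · intro x hx
        show A.symm (ee x) = ee x
        exact (LinearEquiv.symm_apply_eq A).mpr (hfix x hx).symm
      · intro x hx
        show A.symm (ee x) ∈ _
        exact symm_stable A _ hspan (ee x) (Submodule.subset_span ⟨x, hx, rfl⟩)

lemma mem_G {n : ℕ} (g : V n ≃ₗ[ℂ] V n) : g ∈ G n ↔ GP g := Iff.rfl

lemma Vle_mono (n : ℕ) {i j : ℕ} (h : i ≤ j) : Vle n i ≤ Vle n j :=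
  Submodule.span_mono (fun v hv => by
    obtain ⟨x, hx, rfl⟩ := hv
    exact ⟨x, lt_of_lt_of_le hx h, rfl⟩)

lemma G_maps {n : ℕ} (g : G n) (i : ℕ) :
    Vle n i ≤ (Vle n i).comap (g.1 : V n →ₗ[ℂ] V n) := by
  intro x hx
  exact g.2.1 i ⟨x, hx, rfl⟩

/-- The representation of `G` on the quotient `V / V_i`. -/
noncomputable def ρQ (n i : ℕ) : Representation ℂ (G n) (V n ⧸ Vle n i) where
  toFun g := Submodule.mapQ _ _ (g.1 : V n →ₗ[ℂ] V n) (G_maps g i)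
  map_one' := by
    refine LinearMap.ext fun x => ?_
    obtain ⟨y, rfl⟩ := Submodule.Quotient.mk_surjective _ x
    simp [Submodule.mapQ_apply]
  map_mul' g h := by
    refine LinearMap.ext fun x => ?_
    obtain ⟨y, rfl⟩ := Submodule.Quotient.mk_surjective _ x
    simp [Submodule.mapQ_apply]

/-- The index set of the tensor factors of `T_a`: the standard `[n]`-weighted set `[a]`. -/
abbrev WI {n : ℕ} (a : Fin n → ℕ) : Type := (i : Fin n) × Fin (a i)

/-- `T_a = ⨂_i (V/V_{i-1})^{⊗ a_i}`, with tensor factors indexed by `[a]`. -/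
abbrev T (n : ℕ) (a : Fin n → ℕ) : Type := ⨂[ℂ] (x : WI a), (V n ⧸ Vle n x.1)

/-- The representation of `G` on `T_a`. -/
noncomputable def ρT (n : ℕ) (a : Fin n → ℕ) : Representation ℂ (G n) (T n a) where
  toFun g := PiTensorProduct.map fun x => ρQ n x.1 g
  map_one' := by
    have h : (fun x : WI a => ρQ n x.1 1) = fun x : WI a => LinearMap.id := by
      funext x; exact map_one _
    show PiTensorProduct.map (fun x : WI a => ρQ n x.1 1) = 1
    rw [h, PiTensorProduct.map_id]
    rfl
  map_mul' g h := by
    have h2 : (fun x : WI a => ρQ n x.1 (g * h)) =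
        fun x : WI a => (ρQ n x.1 g) ∘ₗ (ρQ n x.1 h) := by
      funext x; exact map_mul _ g h
    show PiTensorProduct.map (fun x : WI a => ρQ n x.1 (g * h)) = _
    rw [h2, PiTensorProduct.map_comp]
    rfl

/-- The canonical projection `V/V_i → V/V_j` for `i ≤ j`. -/
noncomputable def qproj (n : ℕ) {i j : ℕ} (h : i ≤ j) :
    (V n ⧸ Vle n i) →ₗ[ℂ] (V n ⧸ Vle n j) :=
  Submodule.mapQ _ _ LinearMap.id (by
    intro v hv
    simpa using Vle_mono n h hv)

/-- Weight-nondecreasing bijections `[a] ≃ [b]`. -/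
def IsWND {n : ℕ} {a b : Fin n → ℕ} (φ : WI a ≃ WI b) : Prop := ∀ x : WI a, x.1 ≤ (φ x).1

lemma IsWND.symm_le {n : ℕ} {a b : Fin n → ℕ} {φ : WI a ≃ WI b} (hφ : IsWND φ)
    (y : WI b) : ((φ.symm y).1 : ℕ) ≤ (y.1 : ℕ) := by
  have h := hφ (φ.symm y)
  rw [Equiv.apply_symm_apply] at h
  exact h

/-- The map `φ_* : T_a → T_b` induced by a weight-nondecreasing bijection `φ : [a] → [b]`:
reindex the tensor factors along `φ` and apply the canonical projections
`V/V_{i-1} → V/V_{j-1}` factorwise. -/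
noncomputable def ind (n : ℕ) {a b : Fin n → ℕ} (φ : WI a ≃ WI b) (hφ : IsWND φ) :
    T n a →ₗ[ℂ] T n b :=
  (PiTensorProduct.map fun y : WI b => qproj n (hφ.symm_le y)) ∘ₗ
    (PiTensorProduct.reindex ℂ (fun x : WI a => V n ⧸ Vle n x.1) φ).toLinearMap

/-- A linear map `T_a → T_b` is `G`-equivariant if it commutes with the `G`-actions. -/
def IsGEquiv (n : ℕ) {a b : Fin n → ℕ} (f : T n a →ₗ[ℂ] T n b) : Prop :=
  ∀ g : G n, f ∘ₗ ρT n a g = ρT n b g ∘ₗ f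

/-- The space of `G`-equivariant linear maps `T_a → T_b`. -/
noncomputable def EquivMaps (n : ℕ) (a b : Fin n → ℕ) :
    Submodule ℂ (T n a →ₗ[ℂ] T n b) where
  carrier := {f | IsGEquiv n f}
  add_mem' hf hf' g := by
    rw [LinearMap.add_comp, LinearMap.comp_add, hf g, hf' g]
  zero_mem' g := by
    rw [LinearMap.zero_comp, LinearMap.comp_zero]
  smul_mem' c f hf g := by
    rw [LinearMap.smul_comp, LinearMap.comp_smul, hf g]

/-- The standard representation of `G` on `V`. -/
noncomputable def ρV (n : ℕ) : Representation ℂ (G n) (V n) where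
  toFun g := (g.1 : V n →ₗ[ℂ] V n)
  map_one' := rfl
  map_mul' g h := rfl

/-- The tensor power `V^{⊗ m}`. -/
abbrev TP (n m : ℕ) : Type := ⨂[ℂ] (_ : Fin m), V n

/-- The representation of `G` on `V^{⊗ m}`. -/
noncomputable def ρTP (n m : ℕ) : Representation ℂ (G n) (TP n m) where
  toFun g := PiTensorProduct.map fun _ => ρV n g
  map_one' := by
    show PiTensorProduct.map (fun _ : Fin m => ρV n 1) = 1
    have h : (fun _ : Fin m => ρV n 1) = fun _ : Fin m => LinearMap.id := by
      funext x; exact map_one _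
    rw [h, PiTensorProduct.map_id]
    rfl
  map_mul' g h := by
    show PiTensorProduct.map (fun _ : Fin m => ρV n (g * h)) = _
    have h2 : (fun _ : Fin m => ρV n (g * h)) =
        fun _ : Fin m => (ρV n g) ∘ₗ (ρV n h) := by
      funext x; exact map_mul _ g h
    rw [h2, PiTensorProduct.map_comp]
    rfl

/-- A finite direct sum (= finite product) of tensor powers of `V`. -/
abbrev DM (n k : ℕ) (a : Fin k → ℕ) : Type := ∀ i : Fin k, TP n (a i)

/-- The representation of `G` on a finite direct sum of tensor powers of `V`. -/
noncomputable def ρD (n k : ℕ) (a : Fin k → ℕ) : Representation ℂ (G n) (DM n k a) where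
  toFun g := LinearMap.pi fun i => (ρTP n (a i) g) ∘ₗ LinearMap.proj i
  map_one' := by
    refine LinearMap.ext fun v => ?_
    funext i
    simp [LinearMap.pi_apply]
  map_mul' g h := by
    refine LinearMap.ext fun v => ?_
    funext i
    simp [LinearMap.pi_apply]

/-- A representation of `G` is polynomial if it is (equivariantly isomorphic to) a
subquotient `B/A` of a finite direct sum `⨁_{i} V^{⊗ a_i}` of tensor powers of the
standard representation. -/
def IsPolynomial (n : ℕ) {W : Type*} [AddCommGroup W] [Module ℂ W]
    (ρ : Representation ℂ (G n) W) : Prop :=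
  ∃ (k : ℕ) (a : Fin k → ℕ) (A B : Submodule ℂ (DM n k a))
    (hB : ∀ (g : G n) (x : DM n k a), x ∈ B → ρD n k a g x ∈ B),
    A ≤ B ∧ (∀ (g : G n) (x : DM n k a), x ∈ A → ρD n k a g x ∈ A) ∧
    ∃ f : B →ₗ[ℂ] W, Function.Surjective f ∧
      LinearMap.ker f = A.comap B.subtype ∧
      ∀ (g : G n) (x : B), f ⟨ρD n k a g x.1, hB g x.1 x.2⟩ = ρ g (f x)

/-- Membership in the subgroup `H_a ≤ G`: `g` fixes `e_{i,k}` for `k ≤ a_i` and maps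
`e_{i,k}` into `span{e_{i,l} : l > a_i}` for `k > a_i` (indices `k, l` here are
`0`-indexed). -/
def HP (n : ℕ) (a : Fin n → ℕ) (g : G n) : Prop :=
  ∀ (i : Fin n) (k : ℕ),
    (k < a i → g.1 (ee (i, k)) = ee (i, k)) ∧
    (a i ≤ k → g.1 (ee (i, k)) ∈ Submodule.span ℂ {v | ∃ l : ℕ, a i ≤ l ∧ v = ee (i, l)})

/-- The subspace of vectors invariant under all elements of `G` satisfying `P`. -/
def invs {n : ℕ} {W : Type*} [AddCommGroup W] [Module ℂ W]
    (ρ : Representation ℂ (G n) W) (P : G n → Prop) : Submodule ℂ W where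
  carrier := {w | ∀ g : G n, P g → ρ g w = w}
  add_mem' := by
    intro w w' hw hw' g hg
    rw [map_add, hw g hg, hw' g hg]
  zero_mem' := by
    intro g hg
    rw [map_zero]
  smul_mem' := by
    intro c w hw g hg
    rw [map_smul, hw g hg]


set_option synthInstance.maxHeartbeats 400000

lemma mem_invs {n : ℕ} {W : Type*} [AddCommGroup W] [Module ℂ W]
    {ρ : Representation ℂ (G n) W} {P : G n → Prop} {w : W} :
    w ∈ invs ρ P ↔ ∀ g : G n, P g → ρ g w = w := Iff.rfl

/-- Projection of `V` onto the "low" part (coordinates `(i,k)` with `k < a i`). -/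
noncomputable def pmap (n : ℕ) (a : Fin n → ℕ) : V n →ₗ[ℂ] V n :=
  Finsupp.lsum ℂ (fun x => if (x.2 : ℕ) < a x.1 then Finsupp.lsingle x else 0)

lemma pmap_ee {n : ℕ} (a : Fin n → ℕ) (x : Fin n × ℕ) :
    pmap n a (ee x) = if (x.2 : ℕ) < a x.1 then ee x else 0 := by
  rw [pmap, ee, Finsupp.lsum_single]
  split <;> simp

lemma pmap_ee_smul {n : ℕ} (a : Fin n → ℕ) (x : Fin n × ℕ) :
    pmap n a (ee x) = (if (x.2 : ℕ) < a x.1 then (1:ℂ) else 0) • ee x := by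
  rw [pmap_ee]; split <;> simp

/-- The span of the low basis vectors. -/
noncomputable def LowSpan (n : ℕ) (a : Fin n → ℕ) : Submodule ℂ (V n) :=
  Submodule.span ℂ {w | ∃ x : Fin n × ℕ, (x.2 : ℕ) < a x.1 ∧ w = ee x}

lemma pmap_mem_LowSpan {n : ℕ} (a : Fin n → ℕ) (v : V n) :
    pmap n a v ∈ LowSpan n a := by
  induction v using Finsupp.induction_linear with
  | zero => simp
  | add u w hu hw => rw [map_add]; exact Submodule.add_mem _ hu hw
  | single x c =>
      have h : Finsupp.single x c = c • ee x := by
        rw [ee, Finsupp.smul_single, smul_eq_mul, mul_one]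
      rw [h, map_smul]
      refine Submodule.smul_mem _ _ ?_
      rw [pmap_ee]
      split
      · exact Submodule.subset_span ⟨x, ‹_›, rfl⟩
      · exact Submodule.zero_mem _

lemma HP_fix_low {n : ℕ} {a : Fin n → ℕ} {g : G n} (hg : HP n a g) :
    ∀ w ∈ LowSpan n a, g.1 w = w := by
  intro w hw
  induction hw using Submodule.span_induction with
  | mem v hv =>
      obtain ⟨x, hx, rfl⟩ := hv
      exact (hg x.1 x.2 |>.1) hx
  | zero => exact map_zero _
  | add u v _ _ hu hv => rw [map_add, hu, hv]
  | smul c u _ hu => rw [map_smul, hu]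

/-- The linear map scaling coordinate `x` by `c`. -/
noncomputable def dmap {n : ℕ} (x : Fin n × ℕ) (c : ℂ) : V n →ₗ[ℂ] V n :=
  LinearMap.id + (c - 1) • ((Finsupp.lsingle x) ∘ₗ (Finsupp.lapply x))

lemma dmap_apply {n : ℕ} (x : Fin n × ℕ) (c : ℂ) (v : V n) (y : Fin n × ℕ) :
    dmap x c v y = if y = x then c * v y else v y := by
  simp only [dmap, LinearMap.add_apply, LinearMap.id_apply, LinearMap.smul_apply,
    LinearMap.comp_apply, Finsupp.lsingle_apply, Finsupp.lapply_apply,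
    Finsupp.add_apply, Finsupp.smul_apply, Finsupp.single_apply]
  by_cases h : y = x
  · subst h; simp; ring
  · simp [h, Ne.symm]
  
lemma dmap_dmap {n : ℕ} (x : Fin n × ℕ) (c c' : ℂ) (v : V n) :
    dmap x c (dmap x c' v) = dmap x (c * c') v := by
  ext y
  simp only [dmap_apply]
  by_cases h : y = x <;> simp [h, mul_assoc]

/-- The linear automorphism scaling coordinate `x` by a nonzero `c`. -/
noncomputable def dia {n : ℕ} (x : Fin n × ℕ) (c : ℂ) (hc : c ≠ 0) : V n ≃ₗ[ℂ] V n :=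
  LinearEquiv.ofLinear (dmap x c) (dmap x c⁻¹)
    (by apply LinearMap.ext; intro v; apply Finsupp.ext; intro y
        rw [LinearMap.comp_apply, dmap_dmap, mul_inv_cancel₀ hc, LinearMap.id_apply, dmap_apply]
        split <;> simp)
    (by apply LinearMap.ext; intro v; apply Finsupp.ext; intro y
        rw [LinearMap.comp_apply, dmap_dmap, inv_mul_cancel₀ hc, LinearMap.id_apply, dmap_apply]
        split <;> simp)

lemma dia_apply {n : ℕ} (x : Fin n × ℕ) (c : ℂ) (hc : c ≠ 0) (v : V n) (y : Fin n × ℕ) :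
    dia x c hc v y = if y = x then c * v y else v y := dmap_apply x c v y

lemma dia_ee {n : ℕ} (x : Fin n × ℕ) (c : ℂ) (hc : c ≠ 0) (y : Fin n × ℕ) :
    dia x c hc (ee y) = (if y = x then c else 1) • ee y := by
  ext z
  rw [dia_apply, Finsupp.smul_apply]
  by_cases hzy : z = y
  · subst hzy
    by_cases h : z = x <;> simp [h, ee]
  · have h0 : ee y z = 0 := by simp [ee, Finsupp.single_apply, Ne.symm hzy]
    rw [h0, smul_zero]
    split <;> simp [h0]

lemma dia_mem_G {n : ℕ} (x : Fin n × ℕ) (c : ℂ) (hc : c ≠ 0) : dia x c hc ∈ G n := by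
  constructor
  · intro i v hv
    obtain ⟨w, hw, rfl⟩ := hv
    show dia x c hc w ∈ Vle n i
    replace hw := mem_Vle.mp (SetLike.mem_coe.mp hw)
    rw [mem_Vle]
    intro y hy
    rw [dia_apply, hw y hy]
    split <;> simp
  · refine ⟨{x}, ?_, ?_⟩
    · intro y hy
      show dia x c hc (ee y) = ee y
      rw [dia_ee, if_neg (by simpa using hy), one_smul]
    · intro y hy
      show dia x c hc (ee y) ∈ _
      rw [dia_ee]
      exact Submodule.smul_mem _ _ (Submodule.subset_span ⟨y, hy, rfl⟩)

/-- The element of `G` scaling coordinate `x` by `2^j`. -/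
noncomputable def diaG (n : ℕ) (x : Fin n × ℕ) (j : ℕ) : G n :=
  ⟨dia x ((2:ℂ)^j) (pow_ne_zero _ two_ne_zero), dia_mem_G _ _ _⟩

lemma diaG_ee {n : ℕ} (x : Fin n × ℕ) (j : ℕ) (y : Fin n × ℕ) :
    (diaG n x j).1 (ee y) = (if y = x then (2:ℂ)^j else 1) • ee y :=
  dia_ee x ((2:ℂ)^j) (pow_ne_zero _ two_ne_zero) y

lemma HP_diaG {n : ℕ} (a : Fin n → ℕ) (x : Fin n × ℕ) (hx : a x.1 ≤ x.2) (j : ℕ) :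
    HP n a (diaG n x j) := by
  intro i k
  constructor
  · intro hk
    rw [diaG_ee, if_neg, one_smul]
    rintro rfl
    exact absurd hx (by simpa using hk)
  · intro hk
    rw [diaG_ee]
    exact Submodule.smul_mem _ _ (Submodule.subset_span ⟨k, hk, rfl⟩)

lemma HP_one {n : ℕ} (a : Fin n → ℕ) : HP n a 1 := by
  intro i k
  constructor
  · intro _; rfl
  · intro hk
    exact Submodule.subset_span ⟨k, hk, rfl⟩

lemma HP_high_stable {n : ℕ} {a : Fin n → ℕ} {g : G n} (hg : HP n a g) (i : Fin n) :
    ∀ w ∈ Submodule.span ℂ {v : V n | ∃ l : ℕ, a i ≤ l ∧ v = ee (i, l)},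
      g.1 w ∈ Submodule.span ℂ {v : V n | ∃ l : ℕ, a i ≤ l ∧ v = ee (i, l)} := by
  intro w hw
  induction hw using Submodule.span_induction with
  | mem v hv =>
      obtain ⟨l, hl, rfl⟩ := hv
      exact (hg i l |>.2) hl
  | zero => rw [map_zero]; exact Submodule.zero_mem _
  | add u v _ _ hu hv => rw [map_add]; exact Submodule.add_mem _ hu hv
  | smul c u _ hu => rw [map_smul]; exact Submodule.smul_mem _ _ hu

lemma HP_mul {n : ℕ} {a : Fin n → ℕ} {g g' : G n} (hg : HP n a g) (hg' : HP n a g') :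
    HP n a (g * g') := by
  intro i k
  have hmul : ∀ v : V n, (g * g').1 v = g.1 (g'.1 v) := fun v => rfl
  constructor
  · intro hk
    rw [hmul, (hg' i k).1 hk, (hg i k).1 hk]
  · intro hk
    rw [hmul]
    exact HP_high_stable hg i _ ((hg' i k).2 hk)

lemma tensor_subtype_injective {M N : Type*} [AddCommGroup M] [Module ℂ M]
    [AddCommGroup N] [Module ℂ N] (P : Submodule ℂ M) (Q : Submodule ℂ N) :
    Function.Injective (TensorProduct.map P.subtype Q.subtype) := by
  obtain ⟨P', hP⟩ := Submodule.exists_isCompl P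
  obtain ⟨Q', hQ⟩ := Submodule.exists_isCompl Q
  have h : (TensorProduct.map (P.projectionOnto P' hP) (Q.projectionOnto Q' hQ)).comp
      (TensorProduct.map P.subtype Q.subtype) = LinearMap.id := by
    rw [← TensorProduct.map_comp]
    have h1 : (P.projectionOnto P' hP).comp P.subtype = LinearMap.id := by
      ext v; exact congrArg Subtype.val (Submodule.projectionOnto_apply_left hP v)
    have h2 : (Q.projectionOnto Q' hQ).comp Q.subtype = LinearMap.id := by
      ext v; exact congrArg Subtype.val (Submodule.projectionOnto_apply_left hQ v)
    rw [h1, h2, TensorProduct.map_id]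
  intro u v huv
  have := congrArg (TensorProduct.map (P.projectionOnto P' hP)
    (Q.projectionOnto Q' hQ)) huv
  simpa [← LinearMap.comp_apply, h] using this

lemma two_pow_ne_one {d : ℕ} (hd : 1 ≤ d) : (2:ℂ)^d ≠ 1 := by
  intro h
  have h2 : ((2^d : ℕ) : ℂ) = ((1:ℕ) : ℂ) := by push_cast; rw [h]
  have h3 := Nat.cast_inj (R := ℂ) |>.mp h2
  have h4 : 1 < 2^d := Nat.one_lt_two_pow_iff.mpr (by omega)
  omega

/-- The interpolation polynomial: `1` at `1 = 2^0` and `0` at `2^d`, `1 ≤ d ≤ N`. -/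
noncomputable def QP (N : ℕ) : Polynomial ℂ :=
  ∏ d ∈ Finset.Icc 1 N, (Polynomial.C ((1 - 2^d)⁻¹) * (Polynomial.X - Polynomial.C ((2:ℂ)^d)))

lemma QP_natDegree (N : ℕ) : (QP N).natDegree < N + 1 := by
  have h : (QP N).natDegree ≤ ∑ d ∈ Finset.Icc 1 N, 1 := by
    refine le_trans (Polynomial.natDegree_prod_le _ _) (Finset.sum_le_sum ?_)
    intro d _
    refine le_trans (Polynomial.natDegree_mul_le) ?_
    have h1 : (Polynomial.X - Polynomial.C ((2:ℂ)^d)).natDegree = 1 :=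
      Polynomial.natDegree_X_sub_C _
    have h2 : (Polynomial.C ((1 - (2:ℂ)^d)⁻¹)).natDegree = 0 := Polynomial.natDegree_C _
    omega
  have h2 : ∑ d ∈ Finset.Icc 1 N, 1 = N := by
    rw [Finset.sum_const, Nat.card_Icc]; simp
  omega

lemma QP_eval_one (N : ℕ) : (QP N).eval 1 = 1 := by
  rw [QP, Polynomial.eval_prod]
  refine Finset.prod_eq_one ?_
  intro d hd
  rw [Finset.mem_Icc] at hd
  have h2 : (1:ℂ) - 2^d ≠ 0 := by
    intro h
    exact two_pow_ne_one hd.1 (by linear_combination -h)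
  simp only [Polynomial.eval_mul, Polynomial.eval_C, Polynomial.eval_sub, Polynomial.eval_X]
  field_simp

lemma QP_eval_pow {N e : ℕ} (he : e ≤ N) : (QP N).eval ((2:ℂ)^e) = if e = 0 then 1 else 0 := by
  by_cases h : e = 0
  · subst h; simpa using QP_eval_one N
  · rw [if_neg h, QP, Polynomial.eval_prod]
    refine Finset.prod_eq_zero (Finset.mem_Icc.mpr ⟨by omega, he⟩) ?_
    simp

/-- The set of "monomial" vectors for a representation `ρ` and candidate projector `π`. -/
def MSet {n : ℕ} {E : Type*} [AddCommMonoid E] [Module ℂ E] (ρ : Representation ℂ (G n) E)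
    (π : E →ₗ[ℂ] E) (a : Fin n → ℕ) (N : ℕ) (X : Finset (Fin n × ℕ)) : Set E :=
  {v | ∃ d : (Fin n × ℕ) →₀ ℕ, d.support ⊆ X ∧ (∀ x, d x ≤ N) ∧
    (∀ x : Fin n × ℕ, a x.1 ≤ x.2 → ∀ j : ℕ, ρ (diaG n x j) v = ((2:ℂ)^j)^(d x) • v) ∧
    π v = if d = 0 then v else 0}

lemma MSet_mono {n : ℕ} {E : Type*} [AddCommMonoid E] [Module ℂ E]
    {ρ : Representation ℂ (G n) E} {π : E →ₗ[ℂ] E} {a : Fin n → ℕ} {N : ℕ}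
    {X X' : Finset (Fin n × ℕ)} (hXX : X ⊆ X') :
    MSet ρ π a N X ⊆ MSet ρ π a N X' := by
  rintro v ⟨d, h1, h2, h3, h4⟩
  exact ⟨d, h1.trans hXX, h2, h3, h4⟩

/-- The operator identity: on the span of the monomials, the projector `π` is a finite
linear combination, with coefficients summing to `1`, of the action of elements of `H_a`. -/
lemma OI {n : ℕ} {E : Type*} [AddCommMonoid E] [Module ℂ E] (ρ : Representation ℂ (G n) E)
    (π : E →ₗ[ℂ] E) (a : Fin n → ℕ) (N : ℕ) (X : Finset (Fin n × ℕ))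
    (hX : ∀ x ∈ X, a x.1 ≤ x.2) :
    ∀ u ∈ Submodule.span ℂ (MSet ρ π a N X),
    ∃ (m : ℕ) (h : Fin m → G n) (lam : Fin m → ℂ), (∀ i, HP n a (h i)) ∧
      (∑ i, lam i) = 1 ∧ π u = ∑ i, lam i • ρ (h i) u := by
  classical
  revert hX
  induction X using Finset.induction_on with
  | empty =>
      intro hX u hu
      refine ⟨1, fun _ => 1, fun _ => 1, fun _ => HP_one a, by simp, ?_⟩
      have heq : π u = u := by
        have h := LinearMap.eqOn_span' (s := MSet ρ π a N ∅)
          (f := π) (g := LinearMap.id (R := ℂ) (M := E))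
          (fun v hv => by
            obtain ⟨d, h1, h2, h3, h4⟩ := hv
            have hd : d = 0 := by
              ext y
              by_contra hy
              exact absurd (h1 (Finsupp.mem_support_iff.mpr hy)) (Finset.notMem_empty y)
            simpa [hd] using h4)
        simpa using h (SetLike.mem_coe.mpr hu)
      simp [heq]
  | @insert x s hx ih =>
      intro hX u hu
      have hxhigh : a x.1 ≤ x.2 := hX x (Finset.mem_insert_self x s)
      have hXs : ∀ y ∈ s, a y.1 ≤ y.2 := fun y hy => hX y (Finset.mem_insert_of_mem hy)
      set qm : E →ₗ[ℂ] E :=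
        ∑ j ∈ Finset.range (N+1), (QP N).coeff j • (ρ (diaG n x j) : E →ₗ[ℂ] E) with hqm
      have hq_mono : ∀ v ∈ MSet ρ π a N (insert x s),
          (qm v ∈ Submodule.span ℂ (MSet ρ π a N s)) ∧ π (qm v) = π v := by
        rintro v ⟨d, h1, h2, h3, h4⟩
        have hqv : qm v = ((QP N).eval ((2:ℂ)^(d x))) • v := by
          rw [Polynomial.eval_eq_sum_range' (QP_natDegree N)]
          rw [hqm, LinearMap.sum_apply, Finset.sum_smul]
          refine Finset.sum_congr rfl fun j _ => ?_
          rw [LinearMap.smul_apply, h3 x hxhigh j, smul_smul, pow_right_comm]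
        by_cases hdx : d x = 0
        · have he : (QP N).eval ((2:ℂ)^(d x)) = 1 := by rw [hdx, pow_zero, QP_eval_one]
          rw [hqv, he, one_smul]
          refine ⟨Submodule.subset_span ⟨d, ?_, h2, h3, h4⟩, rfl⟩
          intro y hy
          rcases Finset.mem_insert.mp (h1 hy) with h | h
          · subst h; exact absurd hdx (Finsupp.mem_support_iff.mp hy)
          · exact h
        · have he : (QP N).eval ((2:ℂ)^(d x)) = 0 := by
            rw [QP_eval_pow (h2 x)]; exact if_neg hdx
          rw [hqv, he, zero_smul]
          refine ⟨Submodule.zero_mem _, ?_⟩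
          have hd0 : d ≠ 0 := fun h0 => hdx (by rw [h0]; simp)
          rw [map_zero, h4, if_neg hd0]
      have hqu : qm u ∈ Submodule.span ℂ (MSet ρ π a N s) := by
        induction hu using Submodule.span_induction with
        | mem v hv => exact (hq_mono v hv).1
        | zero => rw [map_zero]; exact Submodule.zero_mem _
        | add v w _ _ hv hw => rw [map_add]; exact Submodule.add_mem _ hv hw
        | smul c v _ hv => rw [map_smul]; exact Submodule.smul_mem _ _ hv
      have hπq : π (qm u) = π u := by
        have h := LinearMap.eqOn_span' (s := MSet ρ π a N (insert x s))
          (f := π ∘ₗ qm) (g := π)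
          (fun v hv => by simpa using (hq_mono v hv).2)
        simpa using h (SetLike.mem_coe.mpr hu)
      obtain ⟨m, h, lam, hHP, hsum, hrep⟩ := ih hXs (qm u) hqu
      refine ⟨m * (N+1),
        fun i' => (fun p : Fin m × Fin (N+1) => h p.1 * diaG n x (p.2 : ℕ))
          (finProdFinEquiv.symm i'),
        fun i' => (fun p : Fin m × Fin (N+1) => lam p.1 * (QP N).coeff (p.2 : ℕ))
          (finProdFinEquiv.symm i'), ?_, ?_, ?_⟩
      · intro i'
        exact HP_mul (hHP _) (HP_diaG a x hxhigh _)
      · rw [Equiv.sum_comp finProdFinEquiv.symm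
          (fun p : Fin m × Fin (N+1) => lam p.1 * (QP N).coeff (p.2 : ℕ)),
          Fintype.sum_prod_type]
        have hQ1 : ∑ j : Fin (N+1), (QP N).coeff (j:ℕ) = 1 := by
          have h1 := Polynomial.eval_eq_sum_range' (QP_natDegree N) (1:ℂ)
          rw [QP_eval_one] at h1
          rw [← Finset.sum_range (fun j => (QP N).coeff j)]
          simpa using h1.symm
        calc ∑ i, ∑ j : Fin (N+1), lam i * (QP N).coeff (j:ℕ)
            = ∑ i, lam i * ∑ j : Fin (N+1), (QP N).coeff (j:ℕ) := by
              exact Finset.sum_congr rfl fun i _ => (Finset.mul_sum _ _ _).symm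
          _ = 1 := by
              rw [hQ1]
              simpa using hsum
      · have hstep : ∀ i, ρ (h i) (qm u) = ∑ j ∈ Finset.range (N+1),
            (QP N).coeff j • ρ (h i * diaG n x j) u := by
          intro i
          rw [hqm, LinearMap.sum_apply, map_sum]
          refine Finset.sum_congr rfl fun j _ => ?_
          rw [LinearMap.smul_apply, LinearMap.map_smul, map_mul, Module.End.mul_apply]
        set F : Fin m × Fin (N+1) → E := fun p => (lam p.1 * (QP N).coeff (p.2:ℕ)) •
              ρ (h p.1 * diaG n x (p.2:ℕ)) u with hF
        have e1 : ∑ i' : Fin (m*(N+1)), F (finProdFinEquiv.symm i')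
            = ∑ p : Fin m × Fin (N+1), F p :=
          Equiv.sum_comp (finProdFinEquiv.symm) F
        have e2 : ∑ p : Fin m × Fin (N+1), F p
            = ∑ i, ∑ j ∈ Finset.range (N+1),
                (lam i * (QP N).coeff j) • ρ (h i * diaG n x j) u := by
          rw [Fintype.sum_prod_type]
          exact Finset.sum_congr rfl fun i _ =>
            (Finset.sum_range (fun j => (lam i * (QP N).coeff j) • ρ (h i * diaG n x j) u)).symm
        have hre := e1.trans e2
        calc π u = π (qm u) := hπq.symm
          _ = ∑ i, lam i • ρ (h i) (qm u) := hrep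
          _ = ∑ i, ∑ j ∈ Finset.range (N+1),
                (lam i * (QP N).coeff j) • ρ (h i * diaG n x j) u := by
              refine Finset.sum_congr rfl fun i _ => ?_
              rw [hstep i, Finset.smul_sum]
              exact Finset.sum_congr rfl fun j _ => smul_smul _ _ _
          _ = _ := by rw [hre]

noncomputable instance TPZero (n m : ℕ) : Zero (TP n m) := AddZero.toZero

lemma Crep {n : ℕ} {E : Type*} [AddCommMonoid E] [Module ℂ E] (ρ : Representation ℂ (G n) E)
    (π : E →ₗ[ℂ] E) (a : Fin n → ℕ) (N : ℕ) (S : Set E)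
    (hS : Submodule.span ℂ S = ⊤)
    (hm : ∀ v ∈ S, ∃ X : Finset (Fin n × ℕ), (∀ x ∈ X, a x.1 ≤ x.2) ∧ v ∈ MSet ρ π a N X)
    (u : E) :
    ∃ (m : ℕ) (h : Fin m → G n) (lam : Fin m → ℂ), (∀ i, HP n a (h i)) ∧
      (∑ i, lam i) = 1 ∧ π u = ∑ i, lam i • ρ (h i) u := by
  classical
  have hu : u ∈ Submodule.span ℂ S := hS ▸ Submodule.mem_top
  obtain ⟨T, hTS, hT⟩ := Submodule.mem_span_finite_of_mem_span hu
  choose Xf hXf using hm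
  set XT : Finset (Fin n × ℕ) :=
    T.attach.sup (fun v => if h : (v : E) ∈ S then Xf (v : E) h else ∅) with hXT
  have hhigh : ∀ x ∈ XT, a x.1 ≤ x.2 := by
    intro x hxX
    rcases Finset.mem_sup.mp hxX with ⟨v, _, hxv⟩
    by_cases hvS : (v : E) ∈ S
    · rw [dif_pos hvS] at hxv
      exact (hXf _ hvS).1 x hxv
    · rw [dif_neg hvS] at hxv
      exact absurd hxv (Finset.notMem_empty x)
  have hsub : (T : Set E) ⊆ MSet ρ π a N XT := by
    intro v hv
    have hvS : v ∈ S := hTS hv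
    refine MSet_mono ?_ (hXf v hvS).2
    have hmem : (⟨v, hv⟩ : {x // x ∈ T}) ∈ T.attach := Finset.mem_attach _ _
    rw [hXT]
    exact le_trans (le_of_eq (dif_pos hvS).symm)
      (Finset.le_sup (f := fun v : {x // x ∈ T} =>
        if h : (v : E) ∈ S then Xf (v : E) h else ∅) hmem)
  exact OI ρ π a N XT hhigh u (Submodule.span_mono hsub hT)

/-- The candidate projector on `DM n k b`: apply `pmap` to every tensor factor. -/
noncomputable def piTP (n k : ℕ) (b : Fin k → ℕ) (a : Fin n → ℕ) : DM n k b →ₗ[ℂ] DM n k b :=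
  LinearMap.pi fun i => (PiTensorProduct.map fun _ : Fin (b i) => pmap n a) ∘ₗ LinearMap.proj i

lemma pi_proj_single {n k : ℕ} {b : Fin k → ℕ} (φ : ∀ i, TP n (b i) →ₗ[ℂ] TP n (b i))
    (i : Fin k) (w : TP n (b i)) :
    LinearMap.pi (fun i' => (φ i') ∘ₗ LinearMap.proj i') (Pi.single i w)
      = Pi.single i (φ i w) := by
  classical
  funext i'
  by_cases h : i' = i
  · subst h; simp [LinearMap.pi_apply]
  · simp [LinearMap.pi_apply, Pi.single_eq_of_ne h, map_zero]

lemma rhoD_single {n k : ℕ} {b : Fin k → ℕ} (g : G n) (i : Fin k) (w : TP n (b i)) :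
    ρD n k b g (Pi.single i w) = Pi.single i (ρTP n (b i) g w) :=
  pi_proj_single (fun i' => ρTP n (b i') g) i w

lemma piTP_single {n k : ℕ} {b : Fin k → ℕ} (a : Fin n → ℕ) (i : Fin k) (w : TP n (b i)) :
    piTP n k b a (Pi.single i w)
      = Pi.single i (PiTensorProduct.map (fun _ : Fin (b i) => pmap n a) w) :=
  pi_proj_single (fun i' => PiTensorProduct.map fun _ : Fin (b i') => pmap n a) i w

lemma finsupp_eq_sum_ee {n : ℕ} (v : V n) : v = ∑ x ∈ v.support, v x • ee x := by
  conv_lhs => rw [← Finsupp.sum_single v]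
  rw [Finsupp.sum]
  refine Finset.sum_congr rfl fun x _ => ?_
  rw [ee, Finsupp.smul_single, smul_eq_mul, mul_one]

lemma span_monoTP (n m : ℕ) :
    Submodule.span ℂ {t : TP n m | ∃ f : Fin m → Fin n × ℕ,
      t = PiTensorProduct.tprod ℂ fun j => ee (f j)} = ⊤ := by
  classical
  rw [eq_top_iff, ← PiTensorProduct.span_tprod_eq_top]
  refine Submodule.span_le.mpr ?_
  rintro t ⟨vf, rfl⟩
  have h2 : (PiTensorProduct.tprod ℂ) vf
      = (PiTensorProduct.tprod ℂ) (fun j => ∑ x ∈ (vf j).support, (vf j) x • ee x) := by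
    congr 1; funext j; exact finsupp_eq_sum_ee (vf j)
  rw [SetLike.mem_coe, h2, MultilinearMap.map_sum_finset]
  refine Submodule.sum_mem _ fun r _ => ?_
  rw [MultilinearMap.map_smul_univ]
  exact Submodule.smul_mem _ _ (Submodule.subset_span ⟨fun j => r j, rfl⟩)

/-- The monomials of `DM n k b`. -/
def MonoD (n k : ℕ) (b : Fin k → ℕ) : Set (DM n k b) :=
  {v | ∃ (i : Fin k) (f : Fin (b i) → Fin n × ℕ),
    v = Pi.single i (PiTensorProduct.tprod ℂ fun j => ee (f j))}

lemma span_MonoD (n k : ℕ) (b : Fin k → ℕ) : Submodule.span ℂ (MonoD n k b) = ⊤ := by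
  classical
  rw [Submodule.eq_top_iff']
  intro v
  have hv : v = ∑ i, Pi.single i (v i) := (Finset.univ_sum_single v).symm
  rw [hv]
  refine Submodule.sum_mem _ fun i _ => ?_
  have hw : v i ∈ Submodule.span ℂ {t : TP n (b i) | ∃ f : Fin (b i) → Fin n × ℕ,
      t = PiTensorProduct.tprod ℂ fun j => ee (f j)} := by
    rw [span_monoTP]; trivial
  have h2 := Submodule.mem_map_of_mem
    (f := LinearMap.single ℂ (fun i' : Fin k => TP n (b i')) i) hw
  rw [Submodule.map_span] at h2
  refine Submodule.span_mono ?_ h2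
  rintro t ⟨t', ⟨f, rfl⟩, rfl⟩
  exact ⟨i, f, rfl⟩

lemma rhoTP_diaG_mono {n m : ℕ} (x : Fin n × ℕ) (j : ℕ) (f : Fin m → Fin n × ℕ) :
    ρTP n m (diaG n x j) (PiTensorProduct.tprod ℂ fun j' => ee (f j'))
      = ((2:ℂ)^j)^((Finset.univ.filter (fun j' => f j' = x)).card) •
        PiTensorProduct.tprod ℂ fun j' => ee (f j') := by
  classical
  show PiTensorProduct.map (fun _ => ρV n (diaG n x j)) _ = _
  rw [PiTensorProduct.map_tprod]
  rw [show (fun j' => ρV n (diaG n x j) (ee (f j')))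
      = fun j' => (if f j' = x then (2:ℂ)^j else 1) • ee (f j') from
    funext fun j' => diaG_ee x j (f j')]
  rw [MultilinearMap.map_smul_univ]
  congr 1
  rw [Finset.prod_ite, Finset.prod_const, Finset.prod_const_one, mul_one]

lemma piTP_mono {n m : ℕ} (a : Fin n → ℕ) (f : Fin m → Fin n × ℕ) :
    PiTensorProduct.map (fun _ : Fin m => pmap n a)
        (PiTensorProduct.tprod ℂ fun j' => ee (f j'))
      = (∏ j', if ((f j').2 : ℕ) < a (f j').1 then (1:ℂ) else 0) •
        PiTensorProduct.tprod ℂ fun j' => ee (f j') := by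
  rw [PiTensorProduct.map_tprod]
  rw [show (fun j' => pmap n a (ee (f j')))
      = fun j' => (if ((f j').2 : ℕ) < a (f j').1 then (1:ℂ) else 0) • ee (f j') from
    funext fun j' => pmap_ee_smul a (f j')]
  exact MultilinearMap.map_smul_univ _ _ _

lemma MonoD_mem_MSet (n k : ℕ) (b : Fin k → ℕ) (a : Fin n → ℕ) :
    ∀ v ∈ MonoD n k b, ∃ X : Finset (Fin n × ℕ), (∀ x ∈ X, a x.1 ≤ x.2) ∧
      v ∈ MSet (ρD n k b) (piTP n k b a) a (Finset.univ.sup b) X := by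
  classical
  rintro v ⟨i, f, rfl⟩
  set d : (Fin n × ℕ) →₀ ℕ := Finsupp.onFinset (Finset.univ.image f)
    (fun x => if a x.1 ≤ x.2 then (Finset.univ.filter (fun j => f j = x)).card else 0)
    (fun x hx => by
      rw [Finset.mem_image]
      by_contra hni
      push_neg at hni
      apply hx
      have hc : (Finset.univ.filter (fun j => f j = x)).card = 0 := by
        rw [Finset.card_eq_zero, Finset.filter_eq_empty_iff]
        intro j _
        exact hni j (Finset.mem_univ j)
      simp [hc]) with hd
  have hdapp : ∀ x, d x = if a x.1 ≤ x.2
      then (Finset.univ.filter (fun j => f j = x)).card else 0 := fun x => rfl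
  refine ⟨d.support, ?_, d, subset_rfl, ?_, ?_, ?_⟩
  · intro x hxs
    have := Finsupp.mem_support_iff.mp hxs
    rw [hdapp x] at this
    by_contra hc
    exact this (if_neg hc)
  · intro x
    rw [hdapp x]
    split
    · refine le_trans (le_trans (Finset.card_filter_le _ _) ?_) (Finset.le_sup (Finset.mem_univ i))
      simp
    · exact Nat.zero_le _
  · intro x hxhigh j
    rw [rhoD_single, rhoTP_diaG_mono, Pi.single_smul, hdapp x, if_pos hxhigh]
  · rw [piTP_single, piTP_mono, Pi.single_smul]
    by_cases hall : ∀ j', ((f j').2 : ℕ) < a (f j').1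
    · have hprod : (∏ j', if ((f j').2 : ℕ) < a (f j').1 then (1:ℂ) else 0) = 1 :=
        Finset.prod_eq_one fun j' _ => if_pos (hall j')
      have hd0 : d = 0 := by
        ext x
        rw [hdapp x]
        split
        · rename_i hhigh
          rw [Finsupp.coe_zero, Pi.zero_apply, Finset.card_eq_zero, Finset.filter_eq_empty_iff]
          intro j' _
          rintro rfl
          exact absurd (hall j') (by omega)
        · rfl
      rw [hprod, one_smul, if_pos hd0]
    · push_neg at hall
      obtain ⟨j₀, hj₀⟩ := hall
      have hprod : (∏ j', if ((f j').2 : ℕ) < a (f j').1 then (1:ℂ) else 0) = 0 :=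
        Finset.prod_eq_zero (Finset.mem_univ j₀) (if_neg (by omega))
      have hdne : d ≠ 0 := by
        intro h0
        have h1 : d (f j₀) = 0 := by rw [h0]; rfl
        rw [hdapp (f j₀), if_pos (by omega)] at h1
        rw [Finset.card_eq_zero, Finset.filter_eq_empty_iff] at h1
        exact h1 (Finset.mem_univ j₀) rfl
      rw [hprod, zero_smul, if_neg hdne]

lemma Crep_DM {n k : ℕ} (b : Fin k → ℕ) (a : Fin n → ℕ) (u : DM n k b) :
    ∃ (m : ℕ) (h : Fin m → G n) (lam : Fin m → ℂ), (∀ i, HP n a (h i)) ∧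
      (∑ i, lam i) = 1 ∧ piTP n k b a u = ∑ i, lam i • ρD n k b (h i) u :=
  Crep (ρD n k b) (piTP n k b a) a (Finset.univ.sup b) (MonoD n k b)
    (span_MonoD n k b) (MonoD_mem_MSet n k b a) u

lemma rhoTP_fix {n m : ℕ} {a : Fin n → ℕ} {g : G n} (hg : HP n a g) (w : TP n m) :
    ρTP n m g (PiTensorProduct.map (fun _ : Fin m => pmap n a) w)
      = PiTensorProduct.map (fun _ : Fin m => pmap n a) w := by
  have h := LinearMap.eqOn_span' (s := Set.range (PiTensorProduct.tprod ℂ))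
    (f := (ρTP n m g : TP n m →ₗ[ℂ] TP n m) ∘ₗ PiTensorProduct.map (fun _ : Fin m => pmap n a))
    (g := PiTensorProduct.map (fun _ : Fin m => pmap n a))
    (by
      rintro t ⟨vf, rfl⟩
      simp only [LinearMap.comp_apply]
      rw [PiTensorProduct.map_tprod]
      show PiTensorProduct.map (fun _ => ρV n g) _ = _
      rw [PiTensorProduct.map_tprod]
      congr 1
      funext j'
      exact HP_fix_low hg _ (pmap_mem_LowSpan a (vf j')))
  have hw : w ∈ Submodule.span ℂ (Set.range (PiTensorProduct.tprod ℂ)) := by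
    rw [PiTensorProduct.span_tprod_eq_top]; trivial
  simpa using h (SetLike.mem_coe.mpr hw)

lemma rhoD_fix_piTP {n k : ℕ} {b : Fin k → ℕ} {a : Fin n → ℕ} {g : G n} (hg : HP n a g)
    (u : DM n k b) : ρD n k b g (piTP n k b a u) = piTP n k b a u := by
  funext i
  exact rhoTP_fix hg (u i)

lemma finsupp_add_eq_zero {α : Type*} {d e : α →₀ ℕ} (h : d + e = 0) : d = 0 ∧ e = 0 := by
  have hx : ∀ x, d x + e x = 0 := fun x => by rw [← Finsupp.add_apply, h]; rfl
  constructor <;>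
    exact Finsupp.ext fun x => by
      have := hx x
      simp only [Finsupp.coe_zero, Pi.zero_apply]
      omega

lemma MSet_tmul {n : ℕ} {E F : Type*} [AddCommMonoid E] [Module ℂ E] [AddCommMonoid F] [Module ℂ F]
    (ρE : Representation ℂ (G n) E) (ρF : Representation ℂ (G n) F)
    (πE : E →ₗ[ℂ] E) (πF : F →ₗ[ℂ] F) (a : Fin n → ℕ) {NE NF : ℕ}
    {XE XF : Finset (Fin n × ℕ)} {v : E} {w : F}
    (hv : v ∈ MSet ρE πE a NE XE) (hw : w ∈ MSet ρF πF a NF XF) :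
    v ⊗ₜ[ℂ] w ∈ MSet (ρE.tprod ρF) (TensorProduct.map πE πF) a (NE+NF) (XE ∪ XF) := by
  obtain ⟨d, hd1, hd2, hd3, hd4⟩ := hv
  obtain ⟨e, he1, he2, he3, he4⟩ := hw
  refine ⟨d + e, ?_, ?_, ?_, ?_⟩
  · exact (Finsupp.support_add).trans (Finset.union_subset_union hd1 he1)
  · intro x; rw [Finsupp.add_apply]; exact Nat.add_le_add (hd2 x) (he2 x)
  · intro x hx j
    rw [Representation.tprod_apply, TensorProduct.map_tmul, hd3 x hx j, he3 x hx j,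
      TensorProduct.smul_tmul_smul, Finsupp.add_apply, pow_add]
  · rw [TensorProduct.map_tmul, hd4, he4]
    by_cases h0 : d + e = 0
    · obtain ⟨hd0, he0⟩ := finsupp_add_eq_zero h0
      rw [if_pos hd0, if_pos he0, if_pos h0]
    · rw [if_neg h0]
      by_cases hd0 : d = 0
      · have he0 : e ≠ 0 := fun he => h0 (by rw [hd0, he, add_zero])
        rw [if_neg he0, TensorProduct.tmul_zero]
      · rw [if_neg hd0, TensorProduct.zero_tmul]

lemma span_tmul_top {E F : Type*} [AddCommMonoid E] [Module ℂ E] [AddCommMonoid F] [Module ℂ F]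
    (SE : Set E) (SF : Set F) (hE : Submodule.span ℂ SE = ⊤) (hF : Submodule.span ℂ SF = ⊤) :
    Submodule.span ℂ {t : E ⊗[ℂ] F | ∃ v ∈ SE, ∃ w ∈ SF, t = v ⊗ₜ w} = ⊤ := by
  rw [eq_top_iff, ← TensorProduct.span_tmul_eq_top ℂ E F]
  refine Submodule.span_le.mpr ?_
  rintro t ⟨v, w, rfl⟩
  have hv : v ∈ Submodule.span ℂ SE := hE ▸ Submodule.mem_top
  have hw : w ∈ Submodule.span ℂ SF := hF ▸ Submodule.mem_top
  rw [SetLike.mem_coe]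
  induction hv using Submodule.span_induction with
  | mem v' hv' =>
      induction hw using Submodule.span_induction with
      | mem w' hw' => exact Submodule.subset_span ⟨v', hv', w', hw', rfl⟩
      | zero => rw [TensorProduct.tmul_zero]; exact Submodule.zero_mem _
      | add y z _ _ hy hz => rw [TensorProduct.tmul_add]; exact Submodule.add_mem _ hy hz
      | smul c y _ hy => rw [TensorProduct.tmul_smul]; exact Submodule.smul_mem _ _ hy
  | zero => rw [TensorProduct.zero_tmul]; exact Submodule.zero_mem _
  | add y z _ _ hy hz => rw [TensorProduct.add_tmul]; exact Submodule.add_mem _ hy hz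
  | smul c y _ hy => rw [← TensorProduct.smul_tmul']; exact Submodule.smul_mem _ _ hy

lemma tmap_surjective {E F M N : Type*} [AddCommMonoid E] [Module ℂ E]
    [AddCommMonoid F] [Module ℂ F] [AddCommMonoid M] [Module ℂ M]
    [AddCommMonoid N] [Module ℂ N] {f : E →ₗ[ℂ] M} {g : F →ₗ[ℂ] N}
    (hf : Function.Surjective f) (hg : Function.Surjective g) :
    Function.Surjective (TensorProduct.map f g) := by
  intro w
  induction w using TensorProduct.induction_on with
  | zero => exact ⟨0, map_zero _⟩
  | tmul mv nv =>
      obtain ⟨x, rfl⟩ := hf mv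
      obtain ⟨y, rfl⟩ := hg nv
      exact ⟨x ⊗ₜ y, TensorProduct.map_tmul f g x y⟩
  | add y z hy hz =>
      obtain ⟨u1, rfl⟩ := hy
      obtain ⟨u2, rfl⟩ := hz
      exact ⟨u1 + u2, map_add _ u1 u2⟩

lemma Crep_tensor {n : ℕ} {E F : Type*} [AddCommMonoid E] [Module ℂ E]
    [AddCommMonoid F] [Module ℂ F]
    (ρE : Representation ℂ (G n) E) (ρF : Representation ℂ (G n) F)
    (πE : E →ₗ[ℂ] E) (πF : F →ₗ[ℂ] F) (a : Fin n → ℕ) (NE NF : ℕ)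
    (SE : Set E) (SF : Set F)
    (hSE : Submodule.span ℂ SE = ⊤) (hSF : Submodule.span ℂ SF = ⊤)
    (hmE : ∀ v ∈ SE, ∃ X : Finset (Fin n × ℕ), (∀ x ∈ X, a x.1 ≤ x.2) ∧ v ∈ MSet ρE πE a NE X)
    (hmF : ∀ w ∈ SF, ∃ X : Finset (Fin n × ℕ), (∀ x ∈ X, a x.1 ≤ x.2) ∧ w ∈ MSet ρF πF a NF X)
    (u : E ⊗[ℂ] F) :
    ∃ (m : ℕ) (h : Fin m → G n) (lam : Fin m → ℂ), (∀ i, HP n a (h i)) ∧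
      (∑ i, lam i) = 1 ∧
      TensorProduct.map πE πF u = ∑ i, lam i • (ρE.tprod ρF) (h i) u := by
  refine Crep (ρE.tprod ρF) (TensorProduct.map πE πF) a (NE + NF)
    {t | ∃ v ∈ SE, ∃ w ∈ SF, t = v ⊗ₜ w}
    (span_tmul_top _ _ hSE hSF) ?_ u
  rintro t ⟨v, hv, w, hw, rfl⟩
  obtain ⟨X, hX, hvm⟩ := hmE v hv
  obtain ⟨X', hX', hwm⟩ := hmF w hw
  exact ⟨X ∪ X', fun x hx => (Finset.mem_union.mp hx).elim (hX x) (hX' x),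
    MSet_tmul _ _ _ _ a hvm hwm⟩

/-- The restriction of `ρD` to a stable submodule. -/
noncomputable def rhoB {n k : ℕ} {b : Fin k → ℕ} (B : Submodule ℂ (DM n k b))
    (hB : ∀ (g : G n) (x : DM n k b), x ∈ B → ρD n k b g x ∈ B) :
    Representation ℂ (G n) B where
  toFun g := (ρD n k b g).restrict (fun x hx => hB g x hx)
  map_one' := LinearMap.ext fun x => Subtype.ext (by
    show ρD n k b 1 x.1 = x.1
    rw [map_one]; rfl)
  map_mul' g g' := LinearMap.ext fun x => Subtype.ext (by
    show ρD n k b (g*g') x.1 = ρD n k b g (ρD n k b g' x.1)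
    rw [map_mul]; rfl)

lemma piTP_mem {n k : ℕ} {b : Fin k → ℕ} (a : Fin n → ℕ) (B : Submodule ℂ (DM n k b))
    (hB : ∀ (g : G n) (x : DM n k b), x ∈ B → ρD n k b g x ∈ B) :
    ∀ u ∈ B, piTP n k b a u ∈ B := by
  intro u hu
  obtain ⟨m, h, lam, hHP, hsum, hrep⟩ := Crep_DM b a u
  rw [hrep]
  exact Submodule.sum_mem _ fun i _ => Submodule.smul_mem _ _ (hB (h i) u hu)

/-- The restriction of the projector to a stable submodule. -/
noncomputable def piB {n k : ℕ} {b : Fin k → ℕ} (a : Fin n → ℕ) (B : Submodule ℂ (DM n k b))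
    (hB : ∀ (g : G n) (x : DM n k b), x ∈ B → ρD n k b g x ∈ B) : B →ₗ[ℂ] B :=
  (piTP n k b a).restrict (piTP_mem a B hB)

lemma exists_retraction {M : Type*} [AddCommGroup M] [Module ℂ M] (P : Submodule ℂ M) :
    ∃ r : M →ₗ[ℂ] P, ∀ x : P, r x.1 = x := by
  obtain ⟨Q, hQ⟩ := Submodule.exists_isCompl P
  exact ⟨P.linearProjOfIsCompl Q hQ, fun x => Submodule.linearProjOfIsCompl_apply_left hQ x⟩

lemma exists_retraction_DM {n k : ℕ} (b : Fin k → ℕ) (P : Submodule ℂ (DM n k b)) :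
    ∃ r : DM n k b →ₗ[ℂ] P, ∀ x : P, r x.1 = x :=
  @exists_retraction (DM n k b) _ (inferInstanceAs (Module ℂ (DM n k b))) P

lemma tensor_subtype_injective' {M N : Type*} [AddCommMonoid M] [Module ℂ M]
    [AddCommMonoid N] [Module ℂ N] (P : Submodule ℂ M) (Q : Submodule ℂ N)
    (rP : M →ₗ[ℂ] P) (hrP : ∀ x : P, rP x.1 = x)
    (rQ : N →ₗ[ℂ] Q) (hrQ : ∀ y : Q, rQ y.1 = y) :
    Function.Injective (TensorProduct.map P.subtype Q.subtype) := by
  have h : (TensorProduct.map rP rQ).comp (TensorProduct.map P.subtype Q.subtype)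
      = LinearMap.id := by
    rw [← TensorProduct.map_comp,
        show rP.comp P.subtype = LinearMap.id from LinearMap.ext fun x => hrP x,
        show rQ.comp Q.subtype = LinearMap.id from LinearMap.ext fun y => hrQ y,
        TensorProduct.map_id]
  intro u v huv
  have h2 := congrArg (TensorProduct.map rP rQ) huv
  rw [← LinearMap.comp_apply, ← LinearMap.comp_apply, h] at h2
  simpa using h2

/-- For polynomial representations `M`, `N` of `G`, the canonical map
`M^{H_a} ⊗ N^{H_a} → (M ⊗ N)^{H_a}` is an isomorphism: the canonical inclusion
`M^{H_a} ⊗ N^{H_a} → M ⊗ N` is injective with image the `H_a`-invariants of `M ⊗ N`. -/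
theorem stmt15 (n : ℕ) (hn : 1 ≤ n) (a : Fin n → ℕ)
    (M N : Type) [AddCommGroup M] [Module ℂ M] [AddCommGroup N] [Module ℂ N]
    (ρM : Representation ℂ (G n) M) (ρN : Representation ℂ (G n) N)
    (hM : IsPolynomial n ρM) (hN : IsPolynomial n ρN) :
    Function.Injective
      (TensorProduct.map (invs ρM (HP n a)).subtype (invs ρN (HP n a)).subtype) ∧
    LinearMap.range
      (TensorProduct.map (invs ρM (HP n a)).subtype (invs ρN (HP n a)).subtype) =
      invs (ρM.tprod ρN) (HP n a) := by
  classical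
  constructor
  · exact tensor_subtype_injective _ _
  · apply le_antisymm
    · rintro t ht
      obtain ⟨u, rfl⟩ := ht
      rw [mem_invs]
      intro g hg
      induction u using TensorProduct.induction_on with
      | zero => rw [map_zero, map_zero]
      | tmul mv nv =>
          rw [TensorProduct.map_tmul, Representation.tprod_apply, TensorProduct.map_tmul]
          simp only [Submodule.subtype_apply]
          rw [mem_invs.mp mv.2 g hg, mem_invs.mp nv.2 g hg]
      | add y z hy hz => rw [map_add, map_add, hy, hz]
    · intro w hw
      obtain ⟨kM, bM, AM, BM, hBM, hABM, hAM, fM, hfM_surj, hfM_ker, hfM_eq⟩ := hM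
      obtain ⟨kN, bN, AN, BN, hBN, hABN, hAN, fN, hfN_surj, hfN_ker, hfN_eq⟩ := hN
      obtain ⟨u, hu⟩ := tmap_surjective hfM_surj hfN_surj w
      set piBM : BM →ₗ[ℂ] BM := piB a BM hBM with hpiBM
      set piBN : BN →ₗ[ℂ] BN := piB a BN hBN with hpiBN
      set ι := TensorProduct.map BM.subtype BN.subtype with hι
      obtain ⟨m, h, lam, hHP, hsum, hrep⟩ :=
        Crep_tensor (ρD n kM bM) (ρD n kN bN) (piTP n kM bM a) (piTP n kN bN a) a
          (Finset.univ.sup bM) (Finset.univ.sup bN) (MonoD n kM bM) (MonoD n kN bN)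
          (span_MonoD n kM bM) (span_MonoD n kN bN)
          (MonoD_mem_MSet n kM bM a) (MonoD_mem_MSet n kN bN a) (ι u)
      have hι_pi : ι (TensorProduct.map piBM piBN u)
          = TensorProduct.map (piTP n kM bM a) (piTP n kN bN a) (ι u) := by
        rw [hι, ← LinearMap.comp_apply, ← LinearMap.comp_apply,
          ← TensorProduct.map_comp, ← TensorProduct.map_comp]
        congr 1 <;> exact LinearMap.ext fun x => rfl
      have hι_rho : ∀ (g : G n) (u' : BM ⊗[ℂ] BN),
          ((ρD n kM bM).tprod (ρD n kN bN)) g (ι u')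
            = ι (TensorProduct.map (rhoB BM hBM g) (rhoB BN hBN g) u') := by
        intro g u'
        rw [hι, Representation.tprod_apply, ← LinearMap.comp_apply, ← LinearMap.comp_apply,
          ← TensorProduct.map_comp, ← TensorProduct.map_comp]
        congr 1 <;> exact LinearMap.ext fun x => rfl
      have hz : TensorProduct.map piBM piBN u
          = ∑ i, lam i • TensorProduct.map (rhoB BM hBM (h i)) (rhoB BN hBN (h i)) u := by
        obtain ⟨rM, hrM⟩ := exists_retraction_DM bM BM
        obtain ⟨rN, hrN⟩ := exists_retraction_DM bN BN
        have hinj : Function.Injective ι :=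
          tensor_subtype_injective' BM BN rM hrM rN hrN
        refine hinj ?_
        show ι _ = ι _
        rw [hι_pi, hrep, map_sum]
        exact Finset.sum_congr rfl fun i _ => by rw [hι_rho (h i) u, ← map_smul]
      have hF_rho : ∀ (g : G n) (u' : BM ⊗[ℂ] BN),
          TensorProduct.map fM fN
              (TensorProduct.map (rhoB BM hBM g) (rhoB BN hBN g) u')
            = (ρM.tprod ρN) g (TensorProduct.map fM fN u') := by
        intro g u'
        rw [Representation.tprod_apply, ← LinearMap.comp_apply, ← LinearMap.comp_apply,
          ← TensorProduct.map_comp, ← TensorProduct.map_comp,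
          show fM ∘ₗ rhoB BM hBM g = ρM g ∘ₗ fM from LinearMap.ext fun x => hfM_eq g x,
          show fN ∘ₗ rhoB BN hBN g = ρN g ∘ₗ fN from LinearMap.ext fun x => hfN_eq g x]
      have hFz : TensorProduct.map fM fN (TensorProduct.map piBM piBN u) = w := by
        rw [hz, map_sum]
        have hterm : ∀ i : Fin m, TensorProduct.map fM fN
            (lam i • TensorProduct.map (rhoB BM hBM (h i)) (rhoB BN hBN (h i)) u)
            = lam i • w := by
          intro i
          rw [map_smul, hF_rho, hu, mem_invs.mp hw (h i) (hHP i)]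
        rw [Finset.sum_congr rfl fun i _ => hterm i, ← Finset.sum_smul, hsum, one_smul]
      have hinvM : ∀ x : BM, fM (piBM x) ∈ invs ρM (HP n a) := by
        intro x
        rw [mem_invs]
        intro g hg
        have h1 : rhoB BM hBM g (piBM x) = piBM x :=
          Subtype.ext (rhoD_fix_piTP hg x.1)
        calc ρM g (fM (piBM x)) = fM (rhoB BM hBM g (piBM x)) := (hfM_eq g (piBM x)).symm
          _ = fM (piBM x) := by rw [h1]
      have hinvN : ∀ x : BN, fN (piBN x) ∈ invs ρN (HP n a) := by
        intro x
        rw [mem_invs]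
        intro g hg
        have h1 : rhoB BN hBN g (piBN x) = piBN x :=
          Subtype.ext (rhoD_fix_piTP hg x.1)
        calc ρN g (fN (piBN x)) = fN (rhoB BN hBN g (piBN x)) := (hfN_eq g (piBN x)).symm
          _ = fN (piBN x) := by rw [h1]
      set gM : BM →ₗ[ℂ] (invs ρM (HP n a)) :=
        LinearMap.codRestrict (invs ρM (HP n a)) (fM ∘ₗ piBM) hinvM with hgM
      set gN : BN →ₗ[ℂ] (invs ρN (HP n a)) :=
        LinearMap.codRestrict (invs ρN (HP n a)) (fN ∘ₗ piBN) hinvN with hgN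
      refine ⟨TensorProduct.map gM gN u, ?_⟩
      have hcomp : TensorProduct.map (invs ρM (HP n a)).subtype (invs ρN (HP n a)).subtype ∘ₗ
          TensorProduct.map gM gN = TensorProduct.map fM fN ∘ₗ TensorProduct.map piBM piBN := by
        rw [← TensorProduct.map_comp, ← TensorProduct.map_comp]
        congr 1 <;> exact LinearMap.ext fun x => rfl
      calc TensorProduct.map (invs ρM (HP n a)).subtype (invs ρN (HP n a)).subtype
            (TensorProduct.map gM gN u)
          = TensorProduct.map fM fN (TensorProduct.map piBM piBN u) := by
            rw [← LinearMap.comp_apply, hcomp, LinearMap.comp_apply]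
        _ = w := hFz
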